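/- arXiv:2301.13133 — 2 statements merged into one kernel-verified Lean document; each statement's English description precedes it below -/
import Mathlib

section
/- Let k : ℝ^d × ℝ^d → ℝ be a continuous, bounded, symmetric, integrally strictly positive definite (ISPD) kernel, let X have law with density p with respect to Lebesgue measure, let ψ : Ω → ℝ^m be a square-integrable random vector with each component of h(x) := E[ψ | X=x]·p(x) in L²(ℝ^d), and let (ψ', X') be an independent copy of (ψ, X) with E[|⟨ψ, ψ'⟩ k(X,X')|] < ∞. Then E[⟨ψ, ψ'⟩ k(X, X')] = 0 if and only if E[ψ | X = x] = 0 ∈ ℝ^m for P_X-almost every x. -/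
/-!
Expanding `⟨ψ, ψ'⟩` in coordinates and integrating out the two independent copies one after
the other, each time replacing `ψᵢ` by its conditional expectation `gᵢ(X)` (legitimate because
the kernel is bounded), gives `E[⟨ψ, ψ'⟩ k(X, X')] = ∑ᵢ ∬ hᵢ(x) k(x, x') hᵢ(x') dx dx'` with
`hᵢ = gᵢ p`. By ISPD each summand is nonnegative and vanishes exactly when `hᵢ = 0` Lebesgue-a.e.,
that is, when `gᵢ = 0` `P_X`-a.e.
-/

open MeasureTheory RealInnerProductSpace

section CondExp

variable {Ω α : Type*} [MeasurableSpace Ω] [MeasurableSpace α] {P : Measure Ω}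
  {Y : Ω → α} {f : Ω → ℝ} {g : α → ℝ}

theorem integrable_map_of_condExp_eq_comp (hY : Measurable Y) (hg : Measurable g)
    (hfg : ∀ᵐ ω ∂P, P[f | MeasurableSpace.comap Y inferInstance] ω = g (Y ω)) :
    Integrable g (P.map Y) :=
  (integrable_map_measure hg.aestronglyMeasurable hY.aemeasurable).2 (integrable_condExp.congr hfg)

theorem integral_mul_comp_eq_integral_map_of_condExp_eq_comp [IsFiniteMeasure P]
    (hY : Measurable Y) (hf : Integrable f P) (hg : Measurable g)
    (hfg : ∀ᵐ ω ∂P, P[f | MeasurableSpace.comap Y inferInstance] ω = g (Y ω))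
    {φ : α → ℝ} (hφ : Measurable φ) {D : ℝ} (hφD : ∀ y, |φ y| ≤ D) :
    ∫ ω, f ω * φ (Y ω) ∂P = ∫ y, g y * φ y ∂P.map Y := by
  have hφY : StronglyMeasurable[MeasurableSpace.comap Y inferInstance] (φ ∘ Y) :=
    (hφ.comp (comap_measurable Y)).stronglyMeasurable
  have hφYf : Integrable ((φ ∘ Y) * f) P :=
    hf.bdd_mul (hφ.comp hY).aestronglyMeasurable (.of_forall fun ω => hφD (Y ω))
  calc ∫ ω, f ω * φ (Y ω) ∂P
      = ∫ ω, P[(φ ∘ Y) * f | MeasurableSpace.comap Y inferInstance] ω ∂P := by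
        rw [integral_condExp hY.comap_le]
        simp_rw [Pi.mul_apply, Function.comp, mul_comm]
    _ = ∫ ω, g (Y ω) * φ (Y ω) ∂P := by
        refine integral_congr_ae ?_
        filter_upwards [condExp_mul_of_stronglyMeasurable_left hφY hφYf hf, hfg] with ω h1 h2
        rw [h1, Pi.mul_apply, h2, mul_comm]
        rfl
    _ = ∫ y, g y * φ y ∂P.map Y :=
        (integral_map hY.aemeasurable (hg.mul hφ).aestronglyMeasurable).symm

end CondExp

section KernelIntegral

variable {α : Type*} [MeasurableSpace α] {μ : Measure α} {k : α → α → ℝ} {g : α → ℝ} {C : ℝ}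

theorem measurable_integral_mul_kernel [SFinite μ] (hg : Measurable g)
    (hk : Measurable (Function.uncurry k)) :
    Measurable fun x => ∫ x', g x' * k x x' ∂μ :=
  (StronglyMeasurable.integral_prod_right (f := fun x x' => g x' * k x x')
    ((hg.comp measurable_snd).mul hk).stronglyMeasurable).measurable

theorem abs_integral_mul_kernel_le (hg : Integrable g μ) (hkC : ∀ x y, |k x y| ≤ C) (x : α) :
    |∫ x', g x' * k x x' ∂μ| ≤ (∫ x', |g x'| ∂μ) * C := by
  rw [← Real.norm_eq_abs, ← integral_mul_const C (fun x' => |g x'|)]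
  refine norm_integral_le_of_norm_le (hg.abs.mul_const C) (.of_forall fun x' => ?_)
  rw [Real.norm_eq_abs, abs_mul]
  exact mul_le_mul_of_nonneg_left (hkC x x') (abs_nonneg _)

variable {Ω : Type*} [MeasurableSpace Ω] {P : Measure Ω} {Y : Ω → α} {f : Ω → ℝ}

theorem integrable_prod_mul_mul_kernel (hf : Integrable f P) (hY : Measurable Y)
    (hk : Measurable (Function.uncurry k)) (hkC : ∀ x y, |k x y| ≤ C) :
    Integrable (fun ω : Ω × Ω => f ω.1 * f ω.2 * k (Y ω.1) (Y ω.2)) (P.prod P) := by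
  have hkY : Measurable fun ω : Ω × Ω => k (Y ω.1) (Y ω.2) :=
    hk.comp ((hY.comp measurable_fst).prodMk (hY.comp measurable_snd))
  refine ((hf.mul_prod hf).bdd_mul hkY.aestronglyMeasurable
    (.of_forall fun ω => hkC (Y ω.1) (Y ω.2))).congr (.of_forall fun ω => ?_)
  simp only
  ring

theorem integral_prod_mul_mul_kernel_eq_of_condExp_eq_comp [IsFiniteMeasure P]
    (hY : Measurable Y) (hf : Integrable f P) (hg : Measurable g)
    (hfg : ∀ᵐ ω ∂P, P[f | MeasurableSpace.comap Y inferInstance] ω = g (Y ω))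
    (hk : Measurable (Function.uncurry k)) (hkC : ∀ x y, |k x y| ≤ C) :
    ∫ ω : Ω × Ω, f ω.1 * f ω.2 * k (Y ω.1) (Y ω.2) ∂P.prod P
      = ∫ x, g x * ∫ x', g x' * k x x' ∂P.map Y ∂P.map Y := by
  rw [integral_prod _ (integrable_prod_mul_mul_kernel hf hY hk hkC)]
  have hinner : ∀ ω, ∫ ω', f ω * f ω' * k (Y ω) (Y ω') ∂P
      = f ω * ∫ x', g x' * k (Y ω) x' ∂P.map Y := fun ω => by
    simp_rw [mul_assoc, integral_const_mul]
    exact congrArg (f ω * ·) (integral_mul_comp_eq_integral_map_of_condExp_eq_comp hY hf hg hfg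
      (φ := fun x' => k (Y ω) x') (hk.comp measurable_prodMk_left) (hkC (Y ω)))
  simp_rw [hinner]
  exact integral_mul_comp_eq_integral_map_of_condExp_eq_comp hY hf hg hfg
    (measurable_integral_mul_kernel hg hk)
    (abs_integral_mul_kernel_le (integrable_map_of_condExp_eq_comp hY hg hfg) hkC)

end KernelIntegral

section Density

variable {α : Type*} [MeasurableSpace α] {μ : Measure α} {p : α → ℝ}

theorem integral_withDensity_ofReal (hp : Measurable p) (hp0 : ∀ x, 0 ≤ p x) (F : α → ℝ) :
    ∫ x, F x ∂μ.withDensity (fun x => ENNReal.ofReal (p x)) = ∫ x, p x * F x ∂μ := by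
  rw [integral_withDensity_eq_integral_toReal_smul hp.ennreal_ofReal
    (.of_forall fun _ => ENNReal.ofReal_lt_top)]
  simp_rw [ENNReal.toReal_ofReal (hp0 _), smul_eq_mul]

theorem ae_withDensity_ofReal_eq_zero_iff (hp : Measurable p) (hp0 : ∀ x, 0 ≤ p x)
    (g : α → ℝ) :
    (∀ᵐ x ∂μ.withDensity (fun x => ENNReal.ofReal (p x)), g x = 0)
      ↔ (fun x => g x * p x) =ᵐ[μ] 0 := by
  rw [ae_withDensity_iff hp.ennreal_ofReal]
  refine Filter.eventually_congr (.of_forall fun x => ?_)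
  rw [Ne, ENNReal.ofReal_eq_zero, (hp0 x).ge_iff_eq, Pi.zero_apply, mul_eq_zero, eq_comm]
  tauto

theorem integral_mul_integral_kernel_withDensity_ofReal (hp : Measurable p)
    (hp0 : ∀ x, 0 ≤ p x) (g : α → ℝ) (k : α → α → ℝ) :
    ∫ x, g x * ∫ x', g x' * k x x' ∂μ.withDensity (fun x => ENNReal.ofReal (p x))
        ∂μ.withDensity (fun x => ENNReal.ofReal (p x))
      = ∫ x, ∫ x', g x * p x * k x x' * (g x' * p x') ∂μ ∂μ := by
  simp_rw [integral_withDensity_ofReal hp hp0, ← integral_const_mul]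
  congr 1 with x
  congr 1 with x'
  ring

end Density

section QuadraticForm

variable {α : Type*} [MeasurableSpace α] {μ : Measure α} {k : α → α → ℝ} {h : α → ℝ}

theorem integral_sq_pos_iff (hh : MemLp h 2 μ) : 0 < ∫ x, h x ^ 2 ∂μ ↔ ¬ h =ᵐ[μ] 0 := by
  rw [(integral_nonneg fun x => sq_nonneg (h x)).lt_iff_ne', Ne,
    integral_eq_zero_iff_of_nonneg (fun x => sq_nonneg (h x)) hh.integrable_sq]
  simp only [Filter.EventuallyEq, Pi.zero_apply, pow_eq_zero_iff two_ne_zero]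

theorem integral_integral_mul_kernel_mul_of_ae_eq_zero (hh : h =ᵐ[μ] 0) :
    ∫ x, ∫ x', h x * k x x' * h x' ∂μ ∂μ = 0 :=
  integral_eq_zero_of_ae (hh.mono fun x hx => by simp [show h x = 0 from hx])

theorem integral_integral_mul_kernel_mul_nonneg_and_eq_zero_iff (hh : MemLp h 2 μ)
    (hpos : 0 < ∫ x, h x ^ 2 ∂μ → 0 < ∫ x, ∫ x', h x * k x x' * h x' ∂μ ∂μ) :
    0 ≤ ∫ x, ∫ x', h x * k x x' * h x' ∂μ ∂μ
      ∧ (∫ x, ∫ x', h x * k x x' * h x' ∂μ ∂μ = 0 ↔ h =ᵐ[μ] 0) := by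
  by_cases h0 : h =ᵐ[μ] 0
  · simp [integral_integral_mul_kernel_mul_of_ae_eq_zero h0, h0]
  · have hQ := hpos ((integral_sq_pos_iff hh).2 h0)
    exact ⟨hQ.le, iff_of_false hQ.ne' h0⟩

end QuadraticForm

section Euclidean

variable {ι γ : Type*} [Fintype ι]

theorem EuclideanSpace.real_inner_eq_sum (x y : EuclideanSpace ℝ ι) :
    ⟪x, y⟫ = ∑ i, x i * y i := by
  simp [PiLp.inner_apply, mul_comm]

theorem integral_inner_mul_eq_sum [MeasurableSpace γ] {ρ : Measure γ}
    {u v : γ → EuclideanSpace ℝ ι} {K : γ → ℝ}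
    (h : ∀ i, Integrable (fun z => u z i * v z i * K z) ρ) :
    ∫ z, ⟪u z, v z⟫ * K z ∂ρ = ∑ i, ∫ z, u z i * v z i * K z ∂ρ := by
  simp_rw [EuclideanSpace.real_inner_eq_sum, Finset.sum_mul]
  exact integral_finsetSum _ fun i _ => h i

theorem EuclideanSpace.ae_eq_zero_iff_forall [MeasurableSpace γ] {ρ : Measure γ}
    {u : γ → EuclideanSpace ℝ ι} :
    (∀ᵐ z ∂ρ, u z = 0) ↔ ∀ i, ∀ᵐ z ∂ρ, u z i = 0 := by
  rw [← ae_all_iff]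
  refine Filter.eventually_congr (.of_forall fun z => ⟨fun hz i => by simp [hz], fun hz => ?_⟩)
  ext i
  exact hz i

end Euclidean

theorem mmr_zero_iff_cmr_vector_general
    {Ω : Type*} [MeasurableSpace Ω] (P : Measure Ω) [IsProbabilityMeasure P]
    {d m : ℕ} (X : Ω → (Fin d → ℝ)) (hX : Measurable X)
    (p : (Fin d → ℝ) → ℝ) (hpm : Measurable p) (hp0 : ∀ x, 0 ≤ p x)
    (hlaw : P.map X = volume.withDensity (fun x => ENNReal.ofReal (p x)))
    (k : (Fin d → ℝ) → (Fin d → ℝ) → ℝ)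
    (hkCont : Continuous (fun q : (Fin d → ℝ) × (Fin d → ℝ) => k q.1 q.2))
    (hkBdd : ∃ C : ℝ, ∀ x y, |k x y| ≤ C)
    (hISPD : ∀ f : (Fin d → ℝ) → ℝ, Measurable f → MemLp f 2 volume →
      0 < ∫ x, (f x) ^ 2 ∂volume →
      0 < ∫ x, ∫ x', f x * k x x' * f x' ∂volume ∂volume)
    (ψ : Ω → EuclideanSpace ℝ (Fin m)) (hψ : MemLp ψ 2 P)
    -- a fixed version `g` of the component-wise conditional expectation `E[ψ | X = ·]`:
    (g : (Fin d → ℝ) → EuclideanSpace ℝ (Fin m)) (hg : Measurable g)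
    (hgVersion : ∀ i : Fin m, ∀ᵐ ω ∂P,
      (P[fun ω' => ψ ω' i | MeasurableSpace.comap X inferInstance]) ω = g (X ω) i)
    -- each component of `h(x) = E[ψ | X=x]·p(x)` is in `L²(ℝ^d)`:
    (hhL2 : ∀ i : Fin m, MemLp (fun x => g x i * p x) 2 volume) :
    (∫ ω : Ω × Ω, (⟪ψ ω.1, ψ ω.2⟫ : ℝ) * k (X ω.1) (X ω.2) ∂(P.prod P)) = 0 ↔
      ∀ᵐ x ∂(P.map X), g x = 0 := by
  obtain ⟨C, hkC⟩ := hkBdd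
  have hk : Measurable (Function.uncurry k) := hkCont.measurable
  have hψ_int : ∀ i, Integrable (fun ω => ψ ω i) P := fun i =>
    ((EuclideanSpace.proj i : EuclideanSpace ℝ (Fin m) →L[ℝ] ℝ).comp_memLp' hψ).integrable
      one_le_two
  have hg_meas : ∀ i, Measurable fun x => g x i := fun i =>
    (EuclideanSpace.proj i).continuous.measurable.comp hg
  have hcoord : ∀ i, ∫ ω : Ω × Ω, ψ ω.1 i * ψ ω.2 i * k (X ω.1) (X ω.2) ∂P.prod P
      = ∫ x, ∫ x', g x i * p x * k x x' * (g x' i * p x') := fun i => by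
    rw [integral_prod_mul_mul_kernel_eq_of_condExp_eq_comp hX (hψ_int i) (hg_meas i)
      (hgVersion i) hk hkC, hlaw, integral_mul_integral_kernel_withDensity_ofReal hpm hp0]
  have hquad := fun i => integral_integral_mul_kernel_mul_nonneg_and_eq_zero_iff (hhL2 i)
    (hISPD _ ((hg_meas i).mul hpm) (hhL2 i))
  rw [integral_inner_mul_eq_sum fun i => integrable_prod_mul_mul_kernel (hψ_int i) hX hk hkC,
    Finset.sum_eq_zero_iff_of_nonneg fun i _ => hcoord i ▸ (hquad i).1,
    EuclideanSpace.ae_eq_zero_iff_forall, hlaw]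
  simp_rw [hcoord, (hquad _).2, ae_withDensity_ofReal_eq_zero_iff hpm hp0, Finset.mem_univ,
    true_imp_iff]

/-- Vector-valued version of the MMR/CMR equivalence: for a continuous,
bounded, symmetric, ISPD kernel `k` and a square-integrable random vector `ψ : Ω → ℝ^m`,
`E[⟨ψ, ψ'⟩ k(X, X')] = 0` (with `(ψ', X')` an independent copy of `(ψ, X)`) if and only
if `E[ψ | X = x] = 0 ∈ ℝ^m` for `P_X`-almost every `x`. -/
theorem mmr_zero_iff_cmr_vector
    {Ω : Type*} [MeasurableSpace Ω] (P : Measure Ω) [IsProbabilityMeasure P]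
    {d m : ℕ} (X : Ω → (Fin d → ℝ)) (hX : Measurable X)
    (p : (Fin d → ℝ) → ℝ) (hpm : Measurable p) (hp0 : ∀ x, 0 ≤ p x)
    (hlaw : P.map X = volume.withDensity (fun x => ENNReal.ofReal (p x)))
    (k : (Fin d → ℝ) → (Fin d → ℝ) → ℝ)
    (hkCont : Continuous (fun q : (Fin d → ℝ) × (Fin d → ℝ) => k q.1 q.2))
    (hkBdd : ∃ C : ℝ, ∀ x y, |k x y| ≤ C)
    (hkSymm : ∀ x y, k x y = k y x)
    (hISPD : ∀ f : (Fin d → ℝ) → ℝ, Measurable f → MemLp f 2 volume →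
      0 < ∫ x, (f x) ^ 2 ∂volume →
      0 < ∫ x, ∫ x', f x * k x x' * f x' ∂volume ∂volume)
    (ψ : Ω → EuclideanSpace ℝ (Fin m)) (hψ : MemLp ψ 2 P)
    -- a fixed version `g` of the component-wise conditional expectation `E[ψ | X = ·]`:
    (g : (Fin d → ℝ) → EuclideanSpace ℝ (Fin m)) (hg : Measurable g)
    (hgVersion : ∀ i : Fin m, ∀ᵐ ω ∂P,
      (P[fun ω' => ψ ω' i | MeasurableSpace.comap X inferInstance]) ω = g (X ω) i)
    -- each component of `h(x) = E[ψ | X=x]·p(x)` is in `L²(ℝ^d)`: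
    (hhL2 : ∀ i : Fin m, MemLp (fun x => g x i * p x) 2 volume)
    -- `E[|⟨ψ, ψ'⟩ k(X,X')|] < ∞` on the product space:
    (hInt : Integrable
      (fun ω : Ω × Ω => (⟪ψ ω.1, ψ ω.2⟫ : ℝ) * k (X ω.1) (X ω.2)) (P.prod P)) :
    (∫ ω : Ω × Ω, (⟪ψ ω.1, ψ ω.2⟫ : ℝ) * k (X ω.1) (X ω.2) ∂(P.prod P)) = 0 ↔
      ∀ᵐ x ∂(P.map X), g x = 0 :=
  mmr_zero_iff_cmr_vector_general P X hX p hpm hp0 hlaw k hkCont hkBdd hISPD ψ hψ g hg hgVersion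
    hhL2
end

section
/- Under internal validity of the observational study and overlap, for each a ∈ {0,1} the instance-wise observational potential-outcome signal ψ₁ᵃ is conditionally unbiased for the potential-outcome mean in the observational population: for every x with P(X=x) > 0, E[ψ₁ᵃ | X=x] = E[Y_a | X=x, S=1]. -/
/-! On `{X = x}` the signal is `μ_a(x) / P(S=0 | x)` on the RCT units plus a reweighted
residual `Y - μ_a(x)` on the observational units with `A = a`. Since `μ_a(x)` is the mean of `Y`
over exactly those units, the residual integrates to zero over `{X = x}`, and the first term
integrates to `μ_a(x) P(X = x)`; so `E[ψ₁ᵃ | X = x] = μ_a(x)`. Consistency and mean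
ignorability then identify `μ_a(x)` with `E[Y_a | X = x, S = 1]`. -/

open MeasureTheory

/-- Conditional expectation of `Z` given the event `E`: `E[Z | E] = (∫_E Z dP) / P(E)`. -/
noncomputable def eCond {Ω : Type*} [MeasurableSpace Ω] (P : Measure Ω) (E : Set Ω)
    (Z : Ω → ℝ) : ℝ :=
  (∫ ω in E, Z ω ∂P) / (P E).toReal

/-- Conditional probability of `E'` given the event `E`: `P(E' | E) = P(E' ∩ E) / P(E)`. -/
noncomputable def pCond {Ω : Type*} [MeasurableSpace Ω] (P : Measure Ω) (E' E : Set Ω) : ℝ :=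
  (P (E' ∩ E)).toReal / (P E).toReal

/-- The response surface `μ_a(x) = E[Y | X=x, A=a, S=1]`. -/
noncomputable def mu {Ω 𝒳 : Type*} [MeasurableSpace Ω] (P : Measure Ω)
    (X : Ω → 𝒳) (S A : Ω → Fin 2) (Y : Ω → ℝ) (a : Fin 2) (x : 𝒳) : ℝ :=
  eCond P {ω | X ω = x ∧ A ω = a ∧ S ω = 1} Y

/-- The observational potential-outcome signal
`ψ₁ᵃ = (1 / P(S=0 | X)) · [ 1{S=0}·μ_a(X) +
1{S=1}·(P(S=0 | X)/P(S=1 | X))·1{A=a}(Y − μ_a(X))/P(A=a | X, S=1) ]`. -/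
noncomputable def psi1a {Ω 𝒳 : Type*} [MeasurableSpace Ω] (P : Measure Ω)
    (X : Ω → 𝒳) (S A : Ω → Fin 2) (Y : Ω → ℝ) (a : Fin 2) (ω : Ω) : ℝ :=
  (1 / pCond P {ω' | S ω' = 0} {ω' | X ω' = X ω}) *
    ((if S ω = 0 then (1 : ℝ) else 0) * mu P X S A Y a (X ω) +
      (if S ω = 1 then (1 : ℝ) else 0) *
        (pCond P {ω' | S ω' = 0} {ω' | X ω' = X ω} /
          pCond P {ω' | S ω' = 1} {ω' | X ω' = X ω}) *
        ((if A ω = a then (1 : ℝ) else 0) * (Y ω - mu P X S A Y a (X ω)) /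
          pCond P {ω' | A ω' = a} {ω' | X ω' = X ω ∧ S ω' = 1}))


open Set

section ConditionalMeans

variable {Ω : Type*} [MeasurableSpace Ω] {P : Measure Ω}

theorem eCond_mul_measureReal [IsFiniteMeasure P] (E : Set Ω) (Z : Ω → ℝ) :
    eCond P E Z * P.real E = ∫ ω in E, Z ω ∂P := by
  by_cases hE : P E = 0
  · simp [Measure.restrict_eq_zero.mpr hE, measureReal_def, hE]
  · exact div_mul_cancel₀ _ (ENNReal.toReal_ne_zero.mpr ⟨hE, measure_ne_top P E⟩)

theorem setIntegral_sub_eCond [IsFiniteMeasure P] {E : Set Ω} {Z : Ω → ℝ}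
    (hZ : IntegrableOn Z E P) : ∫ ω in E, (Z ω - eCond P E Z) ∂P = 0 := by
  rw [integral_sub hZ (integrable_const _), setIntegral_const, smul_eq_mul, mul_comm,
    eCond_mul_measureReal, sub_self]

theorem eCond_congr_ae {E : Set Ω} {Z Z' : Ω → ℝ} (hE : MeasurableSet E)
    (h : ∀ᵐ ω ∂P, ω ∈ E → Z ω = Z' ω) : eCond P E Z = eCond P E Z' := by
  rw [eCond, eCond, setIntegral_congr_ae hE h]

theorem measure_inter_ne_zero_of_pCond_ne_zero {E' E : Set Ω} (h : pCond P E' E ≠ 0) :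
    P (E' ∩ E) ≠ 0 := by
  intro h0
  simp [pCond, h0] at h

theorem pCond_mul_measureReal [IsFiniteMeasure P] (E' : Set Ω) {E : Set Ω} (hE : P E ≠ 0) :
    pCond P E' E * P.real E = P.real (E' ∩ E) :=
  div_mul_cancel₀ _ (ENNReal.toReal_ne_zero.mpr ⟨hE, measure_ne_top P E⟩)

theorem pCond_ne_zero [IsFiniteMeasure P] {E' E : Set Ω} (h : P (E' ∩ E) ≠ 0) :
    pCond P E' E ≠ 0 :=
  div_ne_zero (ENNReal.toReal_ne_zero.mpr ⟨h, measure_ne_top P _⟩)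
    (ENNReal.toReal_ne_zero.mpr ⟨fun h0 => h (measure_mono_null inter_subset_right h0),
      measure_ne_top P E⟩)

theorem setIntegral_indicator_sub_eCond [IsFiniteMeasure P] {E T : Set Ω}
    (hT : MeasurableSet T) {Y : Ω → ℝ} (hY : IntegrableOn Y (E ∩ T) P) :
    ∫ ω in E, T.indicator (fun ω => Y ω - eCond P (E ∩ T) Y) ω ∂P = 0 := by
  rw [setIntegral_indicator hT, setIntegral_sub_eCond hY]

theorem eCond_div_pCond_indicator_add_residual [IsFiniteMeasure P] {E R T : Set Ω}
    (hR : MeasurableSet R) (hT : MeasurableSet T) {Y : Ω → ℝ} (hY : Integrable Y P)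
    (hRE : P (R ∩ E) ≠ 0) (c β : ℝ) :
    eCond P E (fun ω => c / pCond P R E * R.indicator 1 ω +
      β * T.indicator (fun ω => Y ω - eCond P (E ∩ T) Y) ω) = c := by
  have hE : P E ≠ 0 := fun h0 => hRE (measure_mono_null inter_subset_right h0)
  have hp : pCond P R E ≠ 0 := pCond_ne_zero hRE
  have hPE : P.real E ≠ 0 := ENNReal.toReal_ne_zero.mpr ⟨hE, measure_ne_top P E⟩
  have hResidual :
      Integrable (fun ω => β * T.indicator (fun ω => Y ω - eCond P (E ∩ T) Y) ω) P :=
    ((hY.sub (integrable_const _)).indicator hT).const_mul β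
  have hModel : Integrable (fun ω => c / pCond P R E * R.indicator (1 : Ω → ℝ) ω) P :=
    ((integrable_const 1).indicator hR).const_mul _
  rw [eCond, ← measureReal_def, integral_add hModel.integrableOn hResidual.integrableOn,
    integral_const_mul, integral_const_mul, setIntegral_indicator_sub_eCond hT hY.integrableOn,
    setIntegral_indicator hR]
  simp only [Pi.one_apply, setIntegral_const, smul_eq_mul, mul_one, mul_zero, add_zero]
  rw [inter_comm, ← pCond_mul_measureReal R hE]
  field_simp

end ConditionalMeans

section Signal

variable {Ω 𝒳 : Type*} [MeasurableSpace Ω] (P : Measure Ω)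
  (X : Ω → 𝒳) (S A : Ω → Fin 2) (Y : Ω → ℝ) (a : Fin 2)

theorem mu_eq_eCond (x : 𝒳) :
    mu P X S A Y a x = eCond P {ω | X ω = x ∧ S ω = 1 ∧ A ω = a} Y := by
  unfold mu
  congr 1
  ext ω
  exact and_congr_right' and_comm

theorem psi1a_eq_of_X_eq {x : 𝒳} (hp0 : pCond P {ω | S ω = 0} {ω | X ω = x} ≠ 0)
    {ω : Ω} (hω : X ω = x) :
    psi1a P X S A Y a ω =
      mu P X S A Y a x / pCond P {ω | S ω = 0} {ω | X ω = x} * {ω | S ω = 0}.indicator 1 ω +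
      (pCond P {ω | S ω = 1} {ω | X ω = x} *
          pCond P {ω | A ω = a} {ω | X ω = x ∧ S ω = 1})⁻¹ *
        ({ω | S ω = 1} ∩ {ω | A ω = a}).indicator (fun ω => Y ω - mu P X S A Y a x) ω := by
  subst hω
  simp only [psi1a, indicator_apply, mem_inter_iff, mem_ofPred_eq, Pi.one_apply]
  generalize S ω = s
  fin_cases s <;> by_cases hA : A ω = a <;> simp [hA] <;> field_simp

end Signal

theorem obs_potential_outcome_signal_unbiased_general
    {Ω 𝒳 : Type*} [MeasurableSpace Ω] [MeasurableSpace 𝒳]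
    [MeasurableSingletonClass 𝒳]
    (P : Measure Ω) [IsProbabilityMeasure P]
    (X : Ω → 𝒳) (S A : Ω → Fin 2) (Yp : Fin 2 → Ω → ℝ) (Y : Ω → ℝ)
    (hX : Measurable X) (hS : Measurable S) (hA : Measurable A)
    (hY : Integrable Y P)
    -- internal validity of the observational study:
    (consistency : ∀ a : Fin 2, ∀ᵐ ω ∂P, S ω = 1 → A ω = a → Y ω = Yp a ω)
    (ignorability : ∀ a a' : Fin 2, ∀ x : 𝒳,
      0 < P {ω | X ω = x ∧ S ω = 1 ∧ A ω = a'} →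
      eCond P {ω | X ω = x ∧ S ω = 1 ∧ A ω = a'} (Yp a)
        = eCond P {ω | X ω = x ∧ S ω = 1} (Yp a))
    (posTreatment : ∀ a : Fin 2, ∀ x : 𝒳, 0 < P {ω | X ω = x ∧ S ω = 1} →
      0 < pCond P {ω | A ω = a} {ω | X ω = x ∧ S ω = 1})
    -- overlap:
    (overlap : ∀ x : 𝒳, 0 < P {ω | X ω = x} →
      0 < P {ω | X ω = x ∧ S ω = 0} ∧ 0 < P {ω | X ω = x ∧ S ω = 1}) :
    ∀ a : Fin 2, ∀ x : 𝒳, 0 < P {ω | X ω = x} →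
      eCond P {ω | X ω = x} (psi1a P X S A Y a)
        = eCond P {ω | X ω = x ∧ S ω = 1} (Yp a) := by
  intro a x hx
  obtain ⟨hRCT, hObs⟩ := overlap x hx
  have hE : MeasurableSet {ω | X ω = x} := hX (measurableSet_singleton x)
  have hT : MeasurableSet ({ω | S ω = 1} ∩ {ω | A ω = a}) :=
    (hS (measurableSet_singleton 1)).inter (hA (measurableSet_singleton a))
  have hR0 : P ({ω | S ω = 0} ∩ {ω | X ω = x}) ≠ 0 := by rw [inter_comm]; exact hRCT.ne'
  have hD : P {ω | X ω = x ∧ S ω = 1 ∧ A ω = a} ≠ 0 := by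
    convert measure_inter_ne_zero_of_pCond_ne_zero (posTreatment a x hObs).ne' using 2
    exact ext fun ω => and_assoc.symm.trans and_comm
  calc eCond P {ω | X ω = x} (psi1a P X S A Y a)
      = eCond P {ω | X ω = x ∧ S ω = 1 ∧ A ω = a} Y := by
        have hp0 := pCond_ne_zero hR0
        rw [eCond_congr_ae hE (ae_of_all _ fun _ => psi1a_eq_of_X_eq _ _ _ _ _ _ hp0), mu_eq_eCond]
        exact eCond_div_pCond_indicator_add_residual (hS (measurableSet_singleton 0)) hT hY hR0 _ _
    _ = eCond P {ω | X ω = x ∧ S ω = 1 ∧ A ω = a} (Yp a) :=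
        eCond_congr_ae (hE.inter hT) <| by
          filter_upwards [consistency a] with ω hω hmem using hω hmem.2.1 hmem.2.2
    _ = eCond P {ω | X ω = x ∧ S ω = 1} (Yp a) := ignorability a a x (pos_iff_ne_zero.mpr hD)

/-- Under internal validity of the observational study and overlap, for
each `a ∈ {0,1}` the instance-wise observational potential-outcome signal `ψ₁ᵃ` is
conditionally unbiased for the potential-outcome mean in the observational population. -/
theorem obs_potential_outcome_signal_unbiased
    {Ω 𝒳 : Type*} [MeasurableSpace Ω] [MeasurableSpace 𝒳]
    [Countable 𝒳] [MeasurableSingletonClass 𝒳]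
    (P : Measure Ω) [IsProbabilityMeasure P]
    (X : Ω → 𝒳) (S A : Ω → Fin 2) (Yp : Fin 2 → Ω → ℝ) (Y : Ω → ℝ)
    (hX : Measurable X) (hS : Measurable S) (hA : Measurable A)
    (hYp : ∀ a, Integrable (Yp a) P) (hY : Integrable Y P)
    -- internal validity of the observational study:
    (consistency : ∀ a : Fin 2, ∀ᵐ ω ∂P, S ω = 1 → A ω = a → Y ω = Yp a ω)
    (ignorability : ∀ a a' : Fin 2, ∀ x : 𝒳,
      0 < P {ω | X ω = x ∧ S ω = 1 ∧ A ω = a'} →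
      eCond P {ω | X ω = x ∧ S ω = 1 ∧ A ω = a'} (Yp a)
        = eCond P {ω | X ω = x ∧ S ω = 1} (Yp a))
    (posTreatment : ∀ a : Fin 2, ∀ x : 𝒳, 0 < P {ω | X ω = x ∧ S ω = 1} →
      0 < pCond P {ω | A ω = a} {ω | X ω = x ∧ S ω = 1})
    -- overlap:
    (overlap : ∀ x : 𝒳, 0 < P {ω | X ω = x} →
      0 < P {ω | X ω = x ∧ S ω = 0} ∧ 0 < P {ω | X ω = x ∧ S ω = 1}) :
    ∀ a : Fin 2, ∀ x : 𝒳, 0 < P {ω | X ω = x} →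
      eCond P {ω | X ω = x} (psi1a P X S A Y a)
        = eCond P {ω | X ω = x ∧ S ω = 1} (Yp a) :=
  obs_potential_outcome_signal_unbiased_general P X S A Yp Y hX hS hA hY consistency ignorability
    posTreatment overlap
end
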